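/- Let E = EuclideanSpace ℝ (Fin 3), let h : E → ℝ be continuously differentiable, let λ : E → ℝ be continuous with λ(y) ≥ λ₀ for some λ₀ > 0 and all y, and define the guidance field v(y) = λ(y) • ∇h(y). Let k_nom : E → E and γ > 0, define a(y) = ⟪v(y), k_nom(y)⟫ + γ·h(y), and on the set where v(y) ≠ 0 define the safety-filtered controller k_QP(y) = k_nom(y) + (max(0, -a(y))/‖v(y)‖²) • v(y). Suppose v(y) ≠ 0 for all y with h(y) ≥ 0, and let y : ℝ → E be differentiable with y'(t) = k_QP(y(t)) for all t ≥ 0 and h(y(0)) ≥ 0, and suppose t ↦ h(y(t)) is continuously differentiable. Then h(y(t)) ≥ 0 for all t ≥ 0: the QP safety filter renders the safe set C = {h ≥ 0} forward invariant for the single integrator ẏ = w. -/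

import Mathlib

/-!
Along a trajectory, `φ(t) = h(y(t))` has derivative `⟪∇h, k_QP⟫`, and the filter enforces
`λ ⟪∇h, k_QP⟫ = ⟪v, k_QP⟫ ≥ -γ φ`. At a time where `φ` vanishes, `v ≠ 0`, and by continuity of
`∇h` this persists for a while; during that time `φ` cannot decrease while it is negative, so it
never becomes negative.
-/

open scoped RealInnerProductSpace

open Set Filter Topology

section Fencing

variable {f f' : ℝ → ℝ} {a b : ℝ}

theorem image_nonneg_of_deriv_right_nonneg_of_neg (hf : ContinuousOn f (Icc a b))
    (hf' : ∀ x ∈ Ico a b, HasDerivWithinAt f (f' x) (Ici x) x) (ha : 0 ≤ f a)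
    (hneg : ∀ x ∈ Ico a b, f x < 0 → 0 ≤ f' x) : ∀ ⦃x⦄, x ∈ Icc a b → 0 ≤ f x := by
  intro x hx
  -- fence `-f` by the lines `ε (t - a + 1)`, which stay above `-f a` and grow strictly
  have hfence : ∀ ε > 0, -f x ≤ ε * (x - a + 1) := by
    intro ε hε
    refine image_le_of_deriv_right_lt_deriv_boundary (f := -f) (f' := -f')
      (B := fun t => ε * (t - a + 1)) (B' := fun _ => ε) hf.neg
      (fun t ht => (hf' t ht).neg) (by simp only [Pi.neg_apply, sub_self, zero_add, mul_one]; linarith) (fun t => ?_) (fun t ht hft => ?_) hx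
    · simpa using ((hasDerivAt_id t).sub_const a |>.add_const 1).const_mul ε
    · have hft_neg : f t < 0 := by
        have : 0 < ε * (t - a + 1) := mul_pos hε (by linarith [ht.1])
        simp only [Pi.neg_apply] at hft
        linarith
      simp only [Pi.neg_apply]
      linarith [hneg t ht hft_neg]
  refine neg_nonpos.mp (le_of_forall_pos_le_add fun δ hδ => ?_)
  have hlen : 0 < x - a + 1 := by linarith [hx.1]
  simpa [div_mul_cancel₀ _ hlen.ne'] using hfence (δ / (x - a + 1)) (div_pos hδ hlen)

theorem image_nonneg_of_eventually_deriv_right_nonneg_of_neg (hf : ContinuousOn f (Icc a b))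
    (hf' : ∀ x ∈ Ico a b, HasDerivWithinAt f (f' x) (Ici x) x) (ha : 0 ≤ f a)
    (hzero : ∀ x ∈ Ico a b, f x = 0 → ∀ᶠ t in 𝓝[>] x, f t < 0 → 0 ≤ f' t) :
    ∀ ⦃x⦄, x ∈ Icc a b → 0 ≤ f x := by
  refine IsClosed.Icc_subset_of_forall_mem_nhdsWithin (s := {x | 0 ≤ f x}) ?_ ha ?_
  · rw [inter_comm]
    exact hf.preimage_isClosed_of_isClosed isClosed_Icc isClosed_Ici
  rintro x ⟨hfx : 0 ≤ f x, hx⟩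
  have hIcc : Icc a b ∈ 𝓝[>] x :=
    mem_of_superset (Icc_mem_nhdsGT hx.2) (Icc_subset_Icc_left hx.1)
  rcases hfx.lt_or_eq with hpos | hzero_x
  · have hcont : ContinuousWithinAt f (Ioi x) x :=
      (hf x (Ico_subset_Icc_self hx)).mono_of_mem_nhdsWithin hIcc
    filter_upwards [hcont.eventually (lt_mem_nhds hpos)] with t ht using ht.le
  · obtain ⟨c, hxc, hsub⟩ :=
      mem_nhdsGT_iff_exists_Ioo_subset.mp ((hzero x hx hzero_x.symm).and hIcc)
    obtain ⟨d, hxd, hdc⟩ := exists_between (mem_Ioi.mp hxc)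
    have hdb : d ≤ b := (hsub ⟨hxd, hdc⟩).2.2
    have hlocal : ∀ t ∈ Ico x d, f t < 0 → 0 ≤ f' t := by
      rintro t ⟨hxt, htd⟩ hft
      rcases hxt.lt_or_eq with hxt | rfl
      · exact (hsub ⟨hxt, htd.trans hdc⟩).1 hft
      · exact absurd hzero_x.symm hft.ne
    have hnonneg := image_nonneg_of_deriv_right_nonneg_of_neg
      (hf.mono (Icc_subset_Icc hx.1 hdb))
      (fun t ht => hf' t ⟨hx.1.trans ht.1, ht.2.trans_le hdb⟩) hfx hlocal
    filter_upwards [Icc_mem_nhdsGT hxd] with t ht using hnonneg ht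

end Fencing

section Gradient

variable {F : Type*} [NormedAddCommGroup F] [InnerProductSpace ℝ F] [CompleteSpace F]
  {f : F → ℝ}

theorem HasGradientAt.comp_hasDerivAt {f' : F} {g : ℝ → F} {g' : F} {t : ℝ}
    (hf : HasGradientAt f f' (g t)) (hg : HasDerivAt g g' t) :
    HasDerivAt (f ∘ g) ⟪f', g'⟫ t := by
  simpa using hf.hasFDerivAt.comp_hasDerivAt t hg

theorem ContDiff.continuous_gradient {n : WithTop ℕ∞} (hf : ContDiff ℝ n f) (hn : n ≠ 0) :
    Continuous (gradient f) :=
  (InnerProductSpace.toDual ℝ F).symm.continuous.comp (hf.continuous_fderiv hn)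

end Gradient

section SafetyFilter

variable {E : Type*} [NormedAddCommGroup E] [InnerProductSpace ℝ E]

/-- The minimiser of `‖w' - w‖²` subject to `⟪v, w'⟫ ≥ -c`, in closed form. -/
noncomputable def qpSafetyFilter (v w : E) (c : ℝ) : E :=
  w + (max 0 (-(⟪v, w⟫ + c)) / ‖v‖ ^ 2) • v

theorem inner_qpSafetyFilter {v : E} (hv : v ≠ 0) (w : E) (c : ℝ) :
    ⟪v, qpSafetyFilter v w c⟫ = max ⟪v, w⟫ (-c) := by
  have hnorm : ‖v‖ ^ 2 ≠ 0 := pow_ne_zero 2 (norm_ne_zero_iff.mpr hv)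
  rw [qpSafetyFilter, inner_add_right, real_inner_smul_right, real_inner_self_eq_norm_sq,
    div_mul_cancel₀ _ hnorm, ← max_add_add_left, add_zero]
  congr 1
  ring

end SafetyFilter

theorem qp_filter_forward_invariance_general
    (h : EuclideanSpace ℝ (Fin 3) → ℝ) (hh : ContDiff ℝ 1 h)
    (lam : EuclideanSpace ℝ (Fin 3) → ℝ)
    (lam₀ : ℝ) (hlam₀ : 0 < lam₀) (hlam_lb : ∀ y, lam₀ ≤ lam y)
    (v : EuclideanSpace ℝ (Fin 3) → EuclideanSpace ℝ (Fin 3))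
    (hv : ∀ y, v y = lam y • gradient h y)
    (knom : EuclideanSpace ℝ (Fin 3) → EuclideanSpace ℝ (Fin 3))
    (γ : ℝ) (hγ : 0 < γ)
    (a : EuclideanSpace ℝ (Fin 3) → ℝ)
    (hadef : ∀ y, a y = ⟪v y, knom y⟫ + γ * h y)
    (kQP : EuclideanSpace ℝ (Fin 3) → EuclideanSpace ℝ (Fin 3))
    (hkQPdef : ∀ y, v y ≠ 0 → kQP y = knom y + (max 0 (-a y) / ‖v y‖ ^ 2) • v y)
    (hvnz : ∀ y, h y ≥ 0 → v y ≠ 0)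
    (y : ℝ → EuclideanSpace ℝ (Fin 3)) (hy : Differentiable ℝ y)
    (hode : ∀ t, 0 ≤ t → deriv y t = kQP (y t))
    (h0 : h (y 0) ≥ 0) :
    ∀ t, 0 ≤ t → h (y t) ≥ 0 := by
  have hlam_pos : ∀ x, 0 < lam x := fun x => hlam₀.trans_le (hlam_lb x)
  have hv_ne : ∀ x, v x ≠ 0 ↔ gradient h x ≠ 0 := fun x => by
    rw [hv, smul_ne_zero_iff_right (hlam_pos x).ne']
  have hderiv : ∀ t, HasDerivAt (fun t => h (y t)) ⟪gradient h (y t), deriv y t⟫ t := fun t =>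
    (hh.differentiable one_ne_zero (y t)).hasGradientAt.comp_hasDerivAt (hy t).hasDerivAt
  have hcbf : ∀ t, 0 ≤ t → v (y t) ≠ 0 →
      -(γ * h (y t)) ≤ lam (y t) * ⟪gradient h (y t), deriv y t⟫ := by
    intro t ht hvt
    rw [← real_inner_smul_left, ← hv, hode t ht, hkQPdef _ hvt, hadef,
      ← qpSafetyFilter, inner_qpSafetyFilter hvt]
    exact le_max_right _ _
  have hgrad_cont : Continuous fun t => gradient h (y t) :=
    (hh.continuous_gradient one_ne_zero).comp hy.continuous
  intro T hT
  refine image_nonneg_of_eventually_deriv_right_nonneg_of_neg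
    (fun t _ => (hderiv t).continuousAt.continuousWithinAt)
    (fun t _ => (hderiv t).hasDerivWithinAt) h0 (fun x hx hx0 => ?_) ⟨hT, le_rfl⟩
  have hgrad_ne : ∀ᶠ t in 𝓝 x, gradient h (y t) ≠ 0 :=
    hgrad_cont.continuousAt.eventually_ne ((hv_ne _).mp (hvnz _ hx0.ge))
  filter_upwards [nhdsWithin_le_nhds hgrad_ne, self_mem_nhdsWithin] with t hne hxt hneg
  have hcbf_t := hcbf t (hx.1.trans hxt.le) ((hv_ne _).mpr hne)
  exact (mul_nonneg_iff_of_pos_left (hlam_pos _)).mp (by nlinarith)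

/-- The QP safety filter renders the safe set `{h ≥ 0}` forward invariant for the
single integrator: with guidance field `v = λ • ∇h` (`λ ≥ lam₀ > 0`), activation value
`a(y) = ⟪v(y), k_nom(y)⟫ + γ h(y)`, and filtered controller
`k_QP(y) = k_nom(y) + (ReLU(-a(y))/‖v(y)‖²) • v(y)`, closed-loop trajectories starting
in the safe set stay in it. -/
theorem qp_filter_forward_invariance
    (h : EuclideanSpace ℝ (Fin 3) → ℝ) (hh : ContDiff ℝ 1 h)
    (lam : EuclideanSpace ℝ (Fin 3) → ℝ) (hlam : Continuous lam)
    (lam₀ : ℝ) (hlam₀ : 0 < lam₀) (hlam_lb : ∀ y, lam₀ ≤ lam y)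
    (v : EuclideanSpace ℝ (Fin 3) → EuclideanSpace ℝ (Fin 3))
    (hv : ∀ y, v y = lam y • gradient h y)
    (knom : EuclideanSpace ℝ (Fin 3) → EuclideanSpace ℝ (Fin 3))
    (γ : ℝ) (hγ : 0 < γ)
    (a : EuclideanSpace ℝ (Fin 3) → ℝ)
    (hadef : ∀ y, a y = ⟪v y, knom y⟫ + γ * h y)
    (kQP : EuclideanSpace ℝ (Fin 3) → EuclideanSpace ℝ (Fin 3))
    (hkQPdef : ∀ y, v y ≠ 0 → kQP y = knom y + (max 0 (-a y) / ‖v y‖ ^ 2) • v y)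
    (hvnz : ∀ y, h y ≥ 0 → v y ≠ 0)
    (y : ℝ → EuclideanSpace ℝ (Fin 3)) (hy : Differentiable ℝ y)
    (hode : ∀ t, 0 ≤ t → deriv y t = kQP (y t))
    (h0 : h (y 0) ≥ 0)
    (hhy : ContDiff ℝ 1 (fun t => h (y t))) :
    ∀ t, 0 ≤ t → h (y t) ≥ 0 :=
  qp_filter_forward_invariance_general h hh lam lam₀ hlam₀ hlam_lb v hv knom γ hγ a hadef kQP
    hkQPdef hvnz y hy hode h0
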